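/- arXiv:2402.02673 — 3 statements merged into one kernel-verified Lean document; each statement's English description precedes it below -/
import Mathlib

section
/- Let t ≥ 2 and let 𝓡 be the t-stage ω-Thiele rule. If there exists an integer i_0 ≥ 2 such that ω(i_0−1) − ω(i_0−2) > ω(i_0) − ω(i_0−1), then 𝓡 does not satisfy Pareto Efficiency: there exist an election E = (C,V) and a stage vector v⃗ such that some committee in 𝓡(E, v⃗) is dominated by another size-k_t committee. -/
/-- The ω-Thiele score of a committee `S`, given voters identified with their
approval ballots: `Σ_{v ∈ V} ω(|S ∩ A_v|)`. -/
noncomputable def thieleScore {α : Type} [DecidableEq α] (ω : ℕ → ℝ)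
    (V : List (Finset α)) (S : Finset α) : ℝ :=
  (V.map fun A => ω (S ∩ A).card).sum

/-- Winning committees of the single-stage ω-Thiele rule on the candidate pool
`C` with target size `k`: all size-`k` committees maximizing the ω-Thiele score. -/
def thieleWinners {α : Type} [DecidableEq α] (ω : ℕ → ℝ)
    (C : Finset α) (V : List (Finset α)) (k : ℕ) : Set (Finset α) :=
  {S | S ⊆ C ∧ S.card = k ∧
    ∀ T ⊆ C, T.card = k → thieleScore ω V T ≤ thieleScore ω V S}

/-- Winning committees of the multi-stage ω-Thiele rule for stage vector `ks`,
applying the same ω-Thiele method with the same approval ballots at every stage: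
the winning committee of each stage is the candidate pool of the next stage. -/
def msThiele {α : Type} [DecidableEq α] (ω : ℕ → ℝ) :
    List ℕ → Finset α → List (Finset α) → Set (Finset α)
  | [], C, _ => {C}
  | k :: ks, C, V => {S | ∃ S₁ ∈ thieleWinners ω C V k, S ∈ msThiele ω ks S₁ V}

/-- `S₁` dominates `S₂`: every voter has at least as many approved candidates in
`S₁` as in `S₂`, and some voter has strictly more. -/
def Dominates {α : Type} [DecidableEq α] (V : List (Finset α)) (S₁ S₂ : Finset α) : Prop :=
  (∀ A ∈ V, (S₂ ∩ A).card ≤ (S₁ ∩ A).card) ∧ ∃ A ∈ V, (S₂ ∩ A).card < (S₁ ∩ A).card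


/-!
Let `Q = {0, …, i₀ + 1}`; candidates outside `Q` are approved by nobody and are discarded by the
early stages. Every ballot approves all of `Q` except two of the candidates `0, 1, 2, 3`: one voter
omits `{0, 1}`, `M` voters each omit `{0, 2}` and `{1, 2}`, and `M + 1` voters each omit `{0, 3}`
and `{1, 3}`. Dropping a candidate costs each voter who approves it that voter's current marginal
gain, so from `Q` it is optimal to drop `3`, as no candidate is omitted by more voters. From
`Q \ {3}`, dropping `2` costs one voter `ω(i₀-1) - ω(i₀-2)` and `2M + 2` voters
`ω(i₀) - ω(i₀-1)`, while dropping `0` or `1` costs `M` voters the former and `M + 1` voters the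
latter; as the former is strictly larger, dropping `2` is optimal once `M` is large. But
`Q \ {2, 3}` is dominated by `Q \ {0, 1}`, which gives the voter omitting `{0, 1}` two more approved
candidates and every other voter as many.
-/

open Finset

section Thiele

variable {α : Type} [DecidableEq α] {ω : ℕ → ℝ}

theorem card_sdiff_inter_sdiff {Q F D : Finset α} (h : F ∪ D ⊆ Q) :
    ((Q \ F) ∩ (Q \ D)).card = Q.card - (F ∪ D).card := by
  rw [← sdiff_union_distrib, card_sdiff_of_subset h]

theorem exists_mem_eq_erase_of_subset {P T : Finset α} (hT : T ⊆ P) (h : T.card + 1 = P.card) :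
    ∃ c ∈ P, T = P.erase c := by
  obtain ⟨c, hc⟩ := card_eq_one.1 (show (P \ T).card = 1 by rw [card_sdiff_of_subset hT]; omega)
  refine ⟨c, (mem_sdiff.1 (hc ▸ mem_singleton_self c)).1, ?_⟩
  rw [← sdiff_singleton_eq_erase, ← hc, Finset.sdiff_sdiff_eq_self hT]

theorem thieleScore_le_thieleScore (hω : Monotone ω) {V : List (Finset α)} {S T : Finset α}
    (h : ∀ A ∈ V, (T ∩ A).card ≤ (S ∩ A).card) : thieleScore ω V T ≤ thieleScore ω V S :=
  List.sum_le_sum fun A hA => hω (h A hA)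

theorem thieleScore_erase_le_of_forall_mem (hω : Monotone ω) {V : List (Finset α)}
    {P : Finset α} {c : α} (hc : c ∈ P) (hV : ∀ A ∈ V, c ∈ A) (d : α) :
    thieleScore ω V (P.erase c) ≤ thieleScore ω V (P.erase d) :=
  thieleScore_le_thieleScore hω fun A hA => by
    rw [erase_inter, erase_inter, card_erase_of_mem (mem_inter.2 ⟨hc, hV A hA⟩)]
    exact pred_card_le_card_erase

theorem mem_thieleWinners_of_forall_subset (hω : Monotone ω) {C S : Finset α}
    {V : List (Finset α)} {k : ℕ} (hSC : S ⊆ C) (hS : S.card = k) (hV : ∀ A ∈ V, A ⊆ S) :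
    S ∈ thieleWinners ω C V k :=
  ⟨hSC, hS, fun _ _ _ => thieleScore_le_thieleScore hω fun A hA => by
    rw [inter_eq_right.2 (hV A hA)]
    exact card_le_card inter_subset_right⟩

theorem erase_mem_thieleWinners {V : List (Finset α)} {P : Finset α} {c : α} (hc : c ∈ P)
    (h : ∀ d ∈ P, thieleScore ω V (P.erase d) ≤ thieleScore ω V (P.erase c)) :
    P.erase c ∈ thieleWinners ω P V (P.card - 1) := by
  refine ⟨erase_subset c P, card_erase_of_mem hc, fun T hT hTcard => ?_⟩
  have hP := card_pos.2 ⟨c, hc⟩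
  obtain ⟨d, hd, rfl⟩ := exists_mem_eq_erase_of_subset hT (by omega)
  exact h d hd

end Thiele

theorem isChain_gt_cons_reverse_range' (m n : ℕ) :
    ((m + n) :: (List.range' m n).reverse).IsChain (· > ·) := by
  simpa [List.range'_concat] using
    List.isChain_reverse.2 ((List.isChain_range' m (n + 1) 1).imp fun _ _ h => by omega)

theorem mem_msThiele_reverse_range'_append {ω : ℕ → ℝ} (hω : Monotone ω)
    {V : List (Finset ℕ)} {ks : List ℕ} {S : Finset ℕ} {m : ℕ} (hV : ∀ A ∈ V, A ⊆ range m)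
    (hS : S ∈ msThiele ω ks (range m) V) :
    ∀ n, S ∈ msThiele ω ((List.range' m n).reverse ++ ks) (range (m + n)) V
  | 0 => hS
  | n + 1 => by
    rw [List.range'_concat, List.reverse_append]
    exact ⟨range (m + n), mem_thieleWinners_of_forall_subset hω
      (range_subset_range.2 (by omega)) (by simp)
      (fun A hA => (hV A hA).trans (range_subset_range.2 (by omega))),
      mem_msThiele_reverse_range'_append hω hV hS n⟩

namespace ParetoCounterexample

def omittedPairs : Finset (Finset ℕ) := {{0, 1}, {0, 2}, {1, 2}, {0, 3}, {1, 3}}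

theorem subset_range_four_of_mem_omittedPairs : ∀ D ∈ omittedPairs, D ⊆ range 4 := by
  decide

-- `j = i₀ - 2`: there are `j + 4` candidates and every ballot approves `i₀` of them.
def ballots (j M : ℕ) : List (Finset ℕ) :=
  (range (j + 4) \ {0, 1}) ::
    (List.replicate M (range (j + 4) \ {0, 2}) ++ List.replicate M (range (j + 4) \ {1, 2}) ++
      List.replicate (M + 1) (range (j + 4) \ {0, 3}) ++
      List.replicate (M + 1) (range (j + 4) \ {1, 3}))

variable {ω : ℕ → ℝ} {j M : ℕ}

theorem exists_eq_sdiff_of_mem_ballots {A : Finset ℕ} (hA : A ∈ ballots j M) :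
    ∃ D ∈ omittedPairs, A = range (j + 4) \ D := by
  simp only [ballots, List.mem_cons, List.mem_append, List.mem_replicate] at hA
  rcases hA with rfl | ⟨⟨⟨⟨_, rfl⟩ | ⟨_, rfl⟩⟩ | ⟨_, rfl⟩⟩ | ⟨_, rfl⟩⟩ <;>
    exact ⟨_, by decide, rfl⟩

theorem subset_range_of_mem_ballots {A : Finset ℕ} (hA : A ∈ ballots j M) :
    A ⊆ range (j + 4) := by
  obtain ⟨D, -, rfl⟩ := exists_eq_sdiff_of_mem_ballots hA
  exact sdiff_subset

theorem mem_of_mem_ballots {A : Finset ℕ} (hA : A ∈ ballots j M) {c : ℕ}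
    (hc : c ∈ range (j + 4)) (h4 : 4 ≤ c) : c ∈ A := by
  obtain ⟨D, hD, rfl⟩ := exists_eq_sdiff_of_mem_ballots hA
  refine mem_sdiff.2 ⟨hc, fun hcD => ?_⟩
  have := subset_range_four_of_mem_omittedPairs D hD hcD
  simp only [mem_range] at this
  omega

theorem card_range_sdiff_inter_range_sdiff {F D : Finset ℕ} (hF : F ⊆ range 4)
    (hD : D ⊆ range 4) :
    ((range (j + 4) \ F) ∩ (range (j + 4) \ D)).card = j + 4 - (F ∪ D).card := by
  rw [card_sdiff_inter_sdiff ((union_subset hF hD).trans (range_subset_range.2 (by omega))),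
    card_range]

theorem thieleScore_ballots {F : Finset ℕ} (hF : F ⊆ range 4) :
    thieleScore ω (ballots j M) (range (j + 4) \ F) =
      ω (j + 4 - (F ∪ {0, 1}).card) + M * ω (j + 4 - (F ∪ {0, 2}).card) +
        M * ω (j + 4 - (F ∪ {1, 2}).card) + (M + 1) * ω (j + 4 - (F ∪ {0, 3}).card) +
        (M + 1) * ω (j + 4 - (F ∪ {1, 3}).card) := by
  simp (disch := decide) only [thieleScore, ballots, List.map_cons, List.map_append,
    List.map_replicate, List.sum_cons, List.sum_append, List.sum_replicate, nsmul_eq_mul,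
    card_range_sdiff_inter_range_sdiff hF]
  push_cast
  ring

theorem dominates_ballots :
    Dominates (ballots j M) (range (j + 4) \ {0, 1}) (range (j + 4) \ {2, 3}) := by
  have h01 : ({0, 1} : Finset ℕ) ⊆ range 4 := by decide
  have h23 : ({2, 3} : Finset ℕ) ⊆ range 4 := by decide
  refine ⟨fun A hA => ?_, _, List.mem_cons_self, ?_⟩
  · obtain ⟨D, hD, rfl⟩ := exists_eq_sdiff_of_mem_ballots hA
    have hD4 := subset_range_four_of_mem_omittedPairs D hD
    rw [card_range_sdiff_inter_range_sdiff h01 hD4, card_range_sdiff_inter_range_sdiff h23 hD4]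
    have := (by decide : ∀ D ∈ omittedPairs, ({0, 1} ∪ D).card ≤ ({2, 3} ∪ D).card) D hD
    omega
  · rw [card_range_sdiff_inter_range_sdiff h01 h01, card_range_sdiff_inter_range_sdiff h23 h01]
    simp

theorem range_sdiff_three_mem_thieleWinners (hω : Monotone ω) :
    range (j + 4) \ {3} ∈ thieleWinners ω (range (j + 4)) (ballots j M) (j + 3) := by
  have h3 : 3 ∈ range (j + 4) := by simp
  rw [sdiff_singleton_eq_erase, show j + 3 = (range (j + 4)).card - 1 by simp]
  refine erase_mem_thieleWinners h3 fun d hd => ?_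
  rcases lt_or_ge d 4 with hd4 | hd4
  · rw [← sdiff_singleton_eq_erase, ← sdiff_singleton_eq_erase,
      thieleScore_ballots (by simpa using hd4), thieleScore_ballots (by decide)]
    have := hω (by omega : j + 1 ≤ j + 2)
    interval_cases d <;>
      norm_num [show j + 4 - 2 = j + 2 by omega, show j + 4 - 3 = j + 1 by omega] <;> linarith
  · exact thieleScore_erase_le_of_forall_mem hω hd
      (fun A hA => mem_of_mem_ballots hA hd hd4) 3

theorem range_sdiff_two_three_mem_thieleWinners (hω : Monotone ω)
    (hM : ω (j + 1) - ω j + (ω (j + 2) - ω (j + 1)) ≤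
      M * (ω (j + 1) - ω j - (ω (j + 2) - ω (j + 1)))) :
    range (j + 4) \ {2, 3} ∈ thieleWinners ω (range (j + 4) \ {3}) (ballots j M) (j + 2) := by
  have h2 : 2 ∈ range (j + 4) \ {3} := by simp
  have hcard : j + 2 = (range (j + 4) \ {3}).card - 1 := by
    rw [card_sdiff_of_subset (by simp)]
    simp
  rw [sdiff_insert, hcard]
  refine erase_mem_thieleWinners h2 fun d hd => ?_
  rcases lt_or_ge d 4 with hd4 | hd4
  · rw [← sdiff_insert, ← sdiff_insert,
      thieleScore_ballots (insert_subset (by simpa using hd4) (by decide)),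
      thieleScore_ballots (by decide)]
    have := hω (by omega : j ≤ j + 1)
    have := hω (by omega : j + 1 ≤ j + 2)
    obtain rfl | rfl | rfl : d = 0 ∨ d = 1 ∨ d = 2 := by
      simp only [mem_sdiff, mem_singleton] at hd
      omega
    all_goals
      norm_num [show j + 4 - 2 = j + 2 by omega, show j + 4 - 3 = j + 1 by omega,
        show j + 4 - 4 = j by omega] <;> linarith
  · exact thieleScore_erase_le_of_forall_mem hω hd
      (fun A hA => mem_of_mem_ballots hA (sdiff_subset hd) hd4) 2

theorem range_sdiff_two_three_mem_msThiele (hω : Monotone ω)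
    (hM : ω (j + 1) - ω j + (ω (j + 2) - ω (j + 1)) ≤
      M * (ω (j + 1) - ω j - (ω (j + 2) - ω (j + 1)))) :
    range (j + 4) \ {2, 3} ∈ msThiele ω [j + 3, j + 2] (range (j + 4)) (ballots j M) :=
  ⟨_, range_sdiff_three_mem_thieleWinners hω, _,
    range_sdiff_two_three_mem_thieleWinners hω hM, rfl⟩

end ParetoCounterexample

open ParetoCounterexample in
theorem multistage_thiele_not_pareto_efficient_general
    (t : ℕ) (ht : 2 ≤ t) (ω : ℕ → ℝ)
    (hmono : Monotone ω)
    (hi : ∃ i₀ : ℕ, 2 ≤ i₀ ∧ ω i₀ - ω (i₀ - 1) < ω (i₀ - 1) - ω (i₀ - 2)) :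
    ∃ (C : Finset ℕ) (V : List (Finset ℕ)) (ks : List ℕ) (hks : ks ≠ []),
      (∀ A ∈ V, A ⊆ C) ∧ ks.length = t ∧
      List.Chain (· > ·) C.card ks ∧ (∀ k ∈ ks, 1 ≤ k) ∧
      ∃ S ∈ msThiele ω ks C V,
        ∃ T, T ⊆ C ∧ T.card = ks.getLast hks ∧ Dominates V T S := by
  obtain ⟨i₀, hi₀, hω⟩ := hi
  obtain ⟨j, rfl⟩ : ∃ j, i₀ = j + 2 := ⟨i₀ - 2, by omega⟩
  obtain ⟨s, rfl⟩ : ∃ s, t = s + 2 := ⟨t - 2, by omega⟩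
  simp only [Nat.add_sub_cancel, show j + 2 - 1 = j + 1 by omega] at hω
  obtain ⟨M, hM⟩ := Archimedean.arch (ω (j + 1) - ω j + (ω (j + 2) - ω (j + 1))) (sub_pos.2 hω)
  rw [nsmul_eq_mul] at hM
  have hQC : range (j + 4) ⊆ range (j + 4 + s) := range_subset_range.2 (by omega)
  have hks : (List.range' (j + 4) s).reverse ++ [j + 3, j + 2] =
      (List.range' (j + 2) (s + 2)).reverse := by
    rw [show s + 2 = 2 + s by omega, ← List.range'_append, List.reverse_append]
    rfl
  refine ⟨range (j + 4 + s), ballots j M, (List.range' (j + 2) (s + 2)).reverse, by simp,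
    fun A hA => (subset_range_of_mem_ballots hA).trans hQC, by simp, ?_, ?_,
    range (j + 4) \ {2, 3}, ?_, range (j + 4) \ {0, 1}, sdiff_subset.trans hQC, ?_,
    dominates_ballots⟩
  · rw [card_range, show j + 4 + s = j + 2 + (s + 2) by omega]
    exact isChain_gt_cons_reverse_range' _ _
  · simp only [List.mem_reverse, List.mem_range']
    omega
  · exact hks ▸ mem_msThiele_reverse_range'_append hmono (fun A => subset_range_of_mem_ballots)
      (range_sdiff_two_three_mem_msThiele hmono hM) s
  · have h01 : {0, 1} ⊆ range (j + 4) :=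
      (by decide : {0, 1} ⊆ range 4).trans (range_subset_range.2 (by omega))
    rw [card_sdiff_of_subset h01]
    simp

/-- Let `t ≥ 2` and let `𝓡` be the `t`-stage ω-Thiele rule
(ω nondecreasing, `ω(0) = 0`).  If `ω(i₀−1) − ω(i₀−2) > ω(i₀) − ω(i₀−1)` for
some integer `i₀ ≥ 2`, then `𝓡` does not satisfy Pareto Efficiency: there exist
an election `E = (C,V)` and a stage vector `ks` such that some committee in
`𝓡(E, ks)` is dominated by another size-`k_t` committee. -/
theorem multistage_thiele_not_pareto_efficient
    (t : ℕ) (ht : 2 ≤ t) (ω : ℕ → ℝ)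
    (hmono : Monotone ω) (h0 : ω 0 = 0)
    (hi : ∃ i₀ : ℕ, 2 ≤ i₀ ∧ ω i₀ - ω (i₀ - 1) < ω (i₀ - 1) - ω (i₀ - 2)) :
    ∃ (C : Finset ℕ) (V : List (Finset ℕ)) (ks : List ℕ) (hks : ks ≠ []),
      (∀ A ∈ V, A ⊆ C) ∧ ks.length = t ∧
      List.Chain (· > ·) C.card ks ∧ (∀ k ∈ ks, 1 ≤ k) ∧
      ∃ S ∈ msThiele ω ks C V,
        ∃ T, T ⊆ C ∧ T.card = ks.getLast hks ∧ Dominates V T S :=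
  multistage_thiele_not_pareto_efficient_general t ht ω hmono hi
end

section
/- For every t ≥ 2, the t-stage Proportional Approval Voting rule (the multi-stage ω-Thiele rule with ω(x) = Σ_{j=1}^x 1/j) does not satisfy Pareto Efficiency: there exist an election E = (C,V) and a stage vector v⃗ such that some winning committee is dominated by another committee of the same size. -/
/-- The PAV weight function `ω(x) = Σ_{j=1}^x 1/j`. -/
noncomputable def pav (x : ℕ) : ℝ := ∑ j ∈ Finset.range x, (1 : ℝ) / (j + 1)

/-!
With ballots `{0,1}, {0,1}, {0,2}, {1,3}, {2,3}, {0,2,3}` on candidates `0,…,3` and stages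
`(3, 2)`, PAV may first keep `{0,1,2}` (tied with `{0,1,3}` at score `8`) and then `{1,2}`
(every pair from `{0,1,2}` scores `6`), yet `{0,3}` dominates `{1,2}`. Further stages go in
front, each removing a candidate that nobody approves: for monotone `ω`, a committee containing
every ballot is always a Thiele winner.
-/

open Finset

section Thiele

variable {α : Type} [DecidableEq α] {ω : ℕ → ℝ}

theorem mem_thieleWinners_of_ballots_subset (hω : Monotone ω) {C S : Finset α}
    {V : List (Finset α)} (hSC : S ⊆ C) (hV : ∀ A ∈ V, A ⊆ S) :
    S ∈ thieleWinners ω C V S.card := by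
  refine ⟨hSC, rfl, fun T _ _ => thieleScore_le_thieleScore hω fun A hA => ?_⟩
  rw [inter_eq_right.2 (hV A hA)]
  exact card_le_card inter_subset_right

theorem msThiele_cons_of_ballots_subset (hω : Monotone ω) {C D S : Finset α}
    {V : List (Finset α)} {ks : List ℕ} (hDC : D ⊆ C) (hV : ∀ A ∈ V, A ⊆ D)
    (hS : S ∈ msThiele ω ks D V) : S ∈ msThiele ω (D.card :: ks) C V :=
  ⟨D, mem_thieleWinners_of_ballots_subset hω hDC hV, hS⟩

end Thiele

theorem pav_monotone : Monotone pav := fun _ _ h =>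
  sum_le_sum_of_subset_of_nonneg (range_subset_range.2 h) fun _ _ _ => by positivity

def descendingStages : ℕ → List ℕ
  | 0 => []
  | n + 1 => (n + 2) :: descendingStages n

theorem length_descendingStages (n : ℕ) : (descendingStages n).length = n := by
  induction n with
  | zero => rfl
  | succ n ih => simp [descendingStages, ih]

theorem isChain_descendingStages (n : ℕ) : ((n + 2) :: descendingStages n).IsChain (· > ·) := by
  induction n with
  | zero => exact .singleton _
  | succ n ih => exact .cons_cons (by omega) ih

theorem two_le_of_mem_descendingStages {n k : ℕ} (hk : k ∈ descendingStages n) : 2 ≤ k := by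
  induction n with
  | zero => simp [descendingStages] at hk
  | succ n ih =>
    rcases List.mem_cons.1 hk with rfl | hk
    · omega
    · exact ih hk

def exampleBallots : List (Finset ℕ) := [{0,1}, {0,1}, {0,2}, {1,3}, {2,3}, {0,2,3}]

theorem exampleBallots_subset_range {n : ℕ} (hn : 4 ≤ n) : ∀ A ∈ exampleBallots, A ⊆ range n :=
  fun A hA => ((show ∀ A ∈ exampleBallots, A ⊆ range 4 by decide) A hA).trans
    (range_subset_range.2 hn)

theorem dominates_exampleBallots : Dominates exampleBallots {0,3} {1,2} := by
  unfold Dominates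
  decide

-- The scores of `{0,1,2}`, `{0,1,3}`, `{0,2,3}`, `{1,2,3}` are `8`, `8`, `47/6`, `15/2`.
theorem mem_thieleWinners_pav_exampleBallots_three :
    ({0,1,2} : Finset ℕ) ∈ thieleWinners pav (range 4) exampleBallots 3 := by
  refine ⟨by decide, rfl, fun T hT hc => ?_⟩
  have hT : T ∈ (range 4).powersetCard 3 := mem_powersetCard.2 ⟨hT, hc⟩
  rw [show (range 4).powersetCard 3 = {{0,1,2}, {0,1,3}, {0,2,3}, {1,2,3}} by decide] at hT
  simp only [mem_insert, mem_singleton] at hT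
  rcases hT with rfl | rfl | rfl | rfl <;>
    norm_num [thieleScore, exampleBallots, pav, sum_range_succ]

theorem mem_thieleWinners_pav_exampleBallots_two :
    ({1,2} : Finset ℕ) ∈ thieleWinners pav {0,1,2} exampleBallots 2 := by
  refine ⟨by decide, rfl, fun T hT hc => ?_⟩
  have hT : T ∈ ({0,1,2} : Finset ℕ).powersetCard 2 := mem_powersetCard.2 ⟨hT, hc⟩
  rw [show ({0,1,2} : Finset ℕ).powersetCard 2 = {{0,1}, {0,2}, {1,2}} by decide] at hT
  simp only [mem_insert, mem_singleton] at hT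
  rcases hT with rfl | rfl | rfl <;>
    norm_num [thieleScore, exampleBallots, pav, sum_range_succ]

theorem mem_msThiele_pav_descendingStages {n : ℕ} (hn : 2 ≤ n) :
    ({1,2} : Finset ℕ) ∈ msThiele pav (descendingStages n) (range (n + 2)) exampleBallots := by
  induction n, hn using Nat.le_induction with
  | base => exact ⟨{0,1,2}, mem_thieleWinners_pav_exampleBallots_three,
      {1,2}, mem_thieleWinners_pav_exampleBallots_two, rfl⟩
  | succ n hn ih =>
    have h := msThiele_cons_of_ballots_subset pav_monotone
      (range_subset_range.2 (Nat.le_succ _)) (exampleBallots_subset_range (by omega)) ih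
    rwa [card_range] at h

/-- For every `t ≥ 2`, the `t`-stage Proportional Approval
Voting rule (the multi-stage ω-Thiele rule with `ω(x) = Σ_{j=1}^x 1/j`) does not
satisfy Pareto Efficiency: there exist an election `E = (C,V)` and a stage
vector `ks` such that some winning committee is dominated by another committee
of the same size. -/
theorem multistage_pav_not_pareto_efficient (t : ℕ) (ht : 2 ≤ t) :
    ∃ (C : Finset ℕ) (V : List (Finset ℕ)) (ks : List ℕ), ks ≠ [] ∧
      (∀ A ∈ V, A ⊆ C) ∧ ks.length = t ∧
      List.Chain (· > ·) C.card ks ∧ (∀ k ∈ ks, 1 ≤ k) ∧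
      ∃ S ∈ msThiele pav ks C V,
        ∃ T, T ⊆ C ∧ T.card = S.card ∧ Dominates V T S := by
  refine ⟨range (t + 2), exampleBallots, descendingStages t,
    List.ne_nil_of_length_pos (by rw [length_descendingStages]; omega),
    exampleBallots_subset_range (by omega), length_descendingStages t,
    by rw [card_range]; exact isChain_descendingStages t,
    fun k hk => one_le_two.trans (two_le_of_mem_descendingStages hk),
    {1,2}, mem_msThiele_pav_descendingStages ht, {0,3}, ?_, by decide, dominates_exampleBallots⟩
  exact (show ({0,3} : Finset ℕ) ⊆ range 4 by decide).trans (range_subset_range.2 (by omega))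
end

section
/- The single-stage Proportional Approval Voting rule (the ω-Thiele rule with ω(x) = Σ_{j=1}^x 1/j) does not satisfy Committee Monotonicity: there exist an election E = (C,V) with approval ballots and a size k such that either some committee in PAV(E,k) extends to no committee in PAV(E,k+1), or some committee in PAV(E,k+1) contains no committee in PAV(E,k). -/
open Finset

section Thiele

variable {α : Type} [DecidableEq α] {ω : ℕ → ℝ}

theorem thieleScore_singleton (hω₀ : ω 0 = 0) (V : List (Finset α)) (c : α) :
    thieleScore ω V {c} = ω 1 * V.countP (fun A => c ∈ A) := by
  induction V with
  | nil => simp [thieleScore]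
  | cons A V ih =>
    simp only [thieleScore, List.map_cons, List.sum_cons] at ih ⊢
    rw [ih, List.countP_cons]
    by_cases hc : c ∈ A <;> simp [hc, hω₀, mul_add, add_comm]

theorem singleton_mem_thieleWinners_one (hω₀ : ω 0 = 0) (hω₁ : 0 ≤ ω 1)
    {C : Finset α} {V : List (Finset α)} {c : α} (hc : c ∈ C)
    (hmax : ∀ d ∈ C, V.countP (fun A => d ∈ A) ≤ V.countP (fun A => c ∈ A)) :
    {c} ∈ thieleWinners ω C V 1 := by
  refine ⟨singleton_subset_iff.mpr hc, card_singleton c, fun T hT hT₁ => ?_⟩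
  obtain ⟨d, rfl⟩ := card_eq_one.mp hT₁
  rw [thieleScore_singleton hω₀, thieleScore_singleton hω₀]
  exact mul_le_mul_of_nonneg_left (by exact_mod_cast hmax d (singleton_subset_iff.mp hT)) hω₁

theorem notMem_thieleWinners_of_lt {C S T : Finset α} {V : List (Finset α)} {k : ℕ}
    (hT : T ⊆ C) (hTk : T.card = k) (hlt : thieleScore ω V S < thieleScore ω V T) :
    S ∉ thieleWinners ω C V k :=
  fun hS => (hS.2.2 T hT hTk).not_gt hlt

end Thiele

@[simp] theorem pav_zero : pav 0 = 0 := by simp [pav]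

@[simp] theorem pav_one : pav 1 = 1 := by norm_num [pav]

@[simp] theorem pav_two : pav 2 = 3 / 2 := by norm_num [pav, sum_range_succ]

def pavCounterexampleBallots : List (Finset ℕ) := [{0}, {1}, {0, 2}, {1, 2}]

theorem thieleScore_pavCounterexample_lt {S : Finset ℕ} (hS : S ⊆ {0, 1, 2})
    (hcard : S.card = 2) (h₂ : 2 ∈ S) :
    thieleScore pav pavCounterexampleBallots S < thieleScore pav pavCounterexampleBallots {0, 1} := by
  have hpairs : (({0, 1, 2} : Finset ℕ).powersetCard 2).filter (2 ∈ ·) = {{0, 2}, {1, 2}} := by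
    decide
  have hmem : S ∈ (({0, 1, 2} : Finset ℕ).powersetCard 2).filter (2 ∈ ·) :=
    mem_filter.mpr ⟨mem_powersetCard.mpr ⟨hS, hcard⟩, h₂⟩
  rw [hpairs] at hmem
  rcases mem_insert.mp hmem with rfl | hmem
  · norm_num [thieleScore, pavCounterexampleBallots]
  · rw [mem_singleton.mp hmem]
    norm_num [thieleScore, pavCounterexampleBallots]

/-- The single-stage Proportional Approval Voting rule does not
satisfy Committee Monotonicity: there exist an election `E = (C,V)` with
approval ballots and a size `k` such that either some committee in `PAV(E,k)`
extends to no committee in `PAV(E,k+1)`, or some committee in `PAV(E,k+1)`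
contains no committee in `PAV(E,k)`. -/
theorem pav_not_committee_monotone :
    ∃ (C : Finset ℕ) (V : List (Finset ℕ)) (k : ℕ),
      (∀ A ∈ V, A ⊆ C) ∧ 1 ≤ k ∧ k + 1 < C.card ∧
      ((∃ S ∈ thieleWinners pav C V k,
          ∀ S' ∈ thieleWinners pav C V (k + 1), ¬ S ⊂ S') ∨
       (∃ S ∈ thieleWinners pav C V (k + 1),
          ∀ S' ∈ thieleWinners pav C V k, ¬ S' ⊂ S)) := by
  refine ⟨{0, 1, 2}, pavCounterexampleBallots, 1, by decide, le_rfl, by decide,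
    Or.inl ⟨{2}, ?_, ?_⟩⟩
  · exact singleton_mem_thieleWinners_one pav_zero (by simp) (by decide) (by decide)
  · intro S hS h₂S
    exact notMem_thieleWinners_of_lt (T := {0, 1}) (by decide) rfl
      (thieleScore_pavCounterexample_lt hS.1 hS.2.1 (singleton_subset_iff.mp h₂S.subset)) hS
end
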